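/- The two condensed configurations defining the color-1 constraint ℰ₁ form a maximal-complete collection: every maximal triple (S₁,S₂,S₃) of nonempty subsets of Λ₁ = {EE, MM, MY0, MY1} satisfying the universal quantifier with respect to ℰ₁ equals, up to permutation of the three components, ({EE,MM,MY0,MY1},{MM},{MM,MY0}) or ({MM,MY0},{MM,MY0},{MM,MY1}). -/
import Mathlib


/-- The four color-1 labels Λ₁ = {EE, MM, MY0, MY1}. -/
inductive Lab1 where
  | EE : Lab1
  | MM : Lab1
  | MY0 : Lab1
  | MY1 : Lab1
deriving DecidableEq

open Lab1

/-- The two condensed configurations defining the color-1 constraint. -/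
def cond1 : List (Fin 3 → Set Lab1) :=
  [ ![{EE, MM, MY0, MY1}, {MM}, {MM, MY0}],
    ![{MM, MY0}, {MM, MY0}, {MM, MY1}] ]

/-- The color-1 constraint ℰ₁: the family of size-3 multisets represented by the two
condensed configurations. -/
def E1 : Set (Multiset Lab1) :=
  {C | ∃ D ∈ cond1, ∃ l₁ ∈ D 0, ∃ l₂ ∈ D 1, ∃ l₃ ∈ D 2,
    C = ({l₁, l₂, l₃} : Multiset Lab1)}

/-- A triple of sets of labels satisfies the universal quantifier w.r.t. ℰ₁ if every
choice of one label per component yields a multiset in ℰ₁. -/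
def E1UQ (S : Fin 3 → Set Lab1) : Prop :=
  ∀ l₁ ∈ S 0, ∀ l₂ ∈ S 1, ∀ l₃ ∈ S 2, ({l₁, l₂, l₃} : Multiset Lab1) ∈ E1

def e1b : Lab1 → Lab1 → Lab1 → Bool
  | .EE, .EE, .EE => false
  | .EE, .EE, .MM => false
  | .EE, .EE, .MY0 => false
  | .EE, .EE, .MY1 => false
  | .EE, .MM, .EE => false
  | .EE, .MM, .MM => true
  | .EE, .MM, .MY0 => true
  | .EE, .MM, .MY1 => false
  | .EE, .MY0, .EE => false
  | .EE, .MY0, .MM => true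
  | .EE, .MY0, .MY0 => false
  | .EE, .MY0, .MY1 => false
  | .EE, .MY1, .EE => false
  | .EE, .MY1, .MM => false
  | .EE, .MY1, .MY0 => false
  | .EE, .MY1, .MY1 => false
  | .MM, .EE, .EE => false
  | .MM, .EE, .MM => true
  | .MM, .EE, .MY0 => true
  | .MM, .EE, .MY1 => false
  | .MM, .MM, .EE => true
  | .MM, .MM, .MM => true
  | .MM, .MM, .MY0 => true
  | .MM, .MM, .MY1 => true
  | .MM, .MY0, .EE => true
  | .MM, .MY0, .MM => true
  | .MM, .MY0, .MY0 => true
  | .MM, .MY0, .MY1 => true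
  | .MM, .MY1, .EE => false
  | .MM, .MY1, .MM => true
  | .MM, .MY1, .MY0 => true
  | .MM, .MY1, .MY1 => false
  | .MY0, .EE, .EE => false
  | .MY0, .EE, .MM => true
  | .MY0, .EE, .MY0 => false
  | .MY0, .EE, .MY1 => false
  | .MY0, .MM, .EE => true
  | .MY0, .MM, .MM => true
  | .MY0, .MM, .MY0 => true
  | .MY0, .MM, .MY1 => true
  | .MY0, .MY0, .EE => false
  | .MY0, .MY0, .MM => true
  | .MY0, .MY0, .MY0 => false
  | .MY0, .MY0, .MY1 => true
  | .MY0, .MY1, .EE => false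
  | .MY0, .MY1, .MM => true
  | .MY0, .MY1, .MY0 => true
  | .MY0, .MY1, .MY1 => false
  | .MY1, .EE, .EE => false
  | .MY1, .EE, .MM => false
  | .MY1, .EE, .MY0 => false
  | .MY1, .EE, .MY1 => false
  | .MY1, .MM, .EE => false
  | .MY1, .MM, .MM => true
  | .MY1, .MM, .MY0 => true
  | .MY1, .MM, .MY1 => false
  | .MY1, .MY0, .EE => false
  | .MY1, .MY0, .MM => true
  | .MY1, .MY0, .MY0 => true
  | .MY1, .MY0, .MY1 => false
  | .MY1, .MY1, .EE => false
  | .MY1, .MY1, .MM => false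
  | .MY1, .MY1, .MY0 => false
  | .MY1, .MY1, .MY1 => false


abbrev R := Lab1 → Bool

def row (a0 a1 a2 a3 : Bool) : R :=
  fun l => match l with | EE => a0 | MM => a1 | MY0 => a2 | MY1 => a3

def allLab (g : Lab1 → Bool) : Bool := g EE && g MM && g MY0 && g MY1
def exLab (g : Lab1 → Bool) : Bool := g EE || g MM || g MY0 || g MY1

def uq3 (f0 f1 f2 : R) : Bool :=
  allLab fun a => !(f0 a) || allLab fun b => !(f1 b) || allLab fun c => !(f2 c) || e1b a b c

def addl (f : R) (l : Lab1) : R := fun l' => f l' || decide (l' = l)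

def maxb (f0 f1 f2 : R) : Bool :=
  (allLab fun l => f0 l || !(uq3 (addl f0 l) f1 f2)) &&
  (allLab fun l => f1 l || !(uq3 f0 (addl f1 l) f2)) &&
  (allLab fun l => f2 l || !(uq3 f0 f1 (addl f2 l)))

def eqR (f g : R) : Bool := allLab fun l => f l == g l

def D11 : R := row true true true true
def D12 : R := row false true false false
def D13 : R := row false true true false
def D21 : R := row false true true false
def D23 : R := row false true false true

def match1 (g0 g1 g2 : R) : Bool :=
  (eqR g0 D11 && eqR g1 D12 && eqR g2 D13) || (eqR g0 D21 && eqR g1 D21 && eqR g2 D23)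

def goalb (f0 f1 f2 : R) : Bool :=
  match1 f0 f1 f2 || match1 f0 f2 f1 || match1 f1 f0 f2 ||
  match1 f1 f2 f0 || match1 f2 f0 f1 || match1 f2 f1 f0

def bools : List Bool := [true, false]
def rows : List R := bools.flatMap fun a => bools.flatMap fun b => bools.flatMap fun c =>
  bools.map fun d => row a b c d

def check1 (f0 f1 f2 : R) : Bool :=
  !(exLab f0 && exLab f1 && exLab f2 && uq3 f0 f1 f2 && maxb f0 f1 f2) || goalb f0 f1 f2

def checkAll : Bool :=
  rows.all fun f0 => rows.all fun f1 => rows.all fun f2 => check1 f0 f1 f2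

lemma check_true : checkAll = true := by rfl

/- reflection lemmas -/

lemma allLab_iff (g : Lab1 → Bool) : allLab g = true ↔ ∀ l, g l = true := by
  constructor
  · intro h l
    simp only [allLab, Bool.and_eq_true] at h
    cases l <;> tauto
  · intro h
    simp only [allLab, Bool.and_eq_true]
    exact ⟨⟨⟨h _, h _⟩, h _⟩, h _⟩

lemma exLab_iff (g : Lab1 → Bool) : exLab g = true ↔ ∃ l, g l = true := by
  constructor
  · intro h
    simp only [exLab, Bool.or_eq_true] at h
    rcases h with ((h|h)|h)|h <;> exact ⟨_, h⟩
  · rintro ⟨l, hl⟩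
    simp only [exLab, Bool.or_eq_true]
    cases l <;> tauto

lemma bor_imp (a b : Bool) : (!a || b) = true ↔ (a = true → b = true) := by
  cases a <;> cases b <;> simp

lemma uq3_iff (f0 f1 f2 : R) : uq3 f0 f1 f2 = true ↔
    ∀ a b c, f0 a = true → f1 b = true → f2 c = true → e1b a b c = true := by
  simp only [uq3, allLab_iff, bor_imp]
  tauto

lemma eqR_eq {f g : R} (h : eqR f g = true) : f = g := by
  funext l
  exact beq_iff_eq.mp ((allLab_iff _).mp h l)

lemma row_mem (a b c d : Bool) : row a b c d ∈ rows := by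
  refine List.mem_flatMap.2 ⟨a, ?_, List.mem_flatMap.2 ⟨b, ?_,
    List.mem_flatMap.2 ⟨c, ?_, List.mem_map.2 ⟨d, ?_, rfl⟩⟩⟩⟩ <;>
    first
      | (cases a <;> simp [bools])
      | (cases b <;> simp [bools])
      | (cases c <;> simp [bools])
      | (cases d <;> simp [bools])

lemma mem_rows (g : R) : g ∈ rows := by
  have h : g = row (g EE) (g MM) (g MY0) (g MY1) := by
    funext l; cases l <;> rfl
  rw [h]; exact row_mem _ _ _ _

/- E1 characterization -/

lemma mem1 (x y : Lab1) (hx : x ∈ ({EE, MM, MY0, MY1} : Set Lab1))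
    (hy : y ∈ ({MM, MY0} : Set Lab1)) : ({x, MM, y} : Multiset Lab1) ∈ E1 :=
  ⟨![{EE, MM, MY0, MY1}, {MM}, {MM, MY0}], by simp [cond1], x, hx, MM, rfl, y, hy, rfl⟩

lemma mem2 (x y z : Lab1) (hx : x ∈ ({MM, MY0} : Set Lab1))
    (hy : y ∈ ({MM, MY0} : Set Lab1)) (hz : z ∈ ({MM, MY1} : Set Lab1)) :
    ({x, y, z} : Multiset Lab1) ∈ E1 :=
  ⟨![{MM, MY0}, {MM, MY0}, {MM, MY1}], by simp [cond1], x, hx, y, hy, z, hz, rfl⟩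

lemma E1_iff (C : Multiset Lab1) : C ∈ E1 ↔
    C = ({EE, MM, MM} : Multiset Lab1) ∨ C = ({MM, MM, MM} : Multiset Lab1) ∨
    C = ({MY0, MM, MM} : Multiset Lab1) ∨ C = ({MY1, MM, MM} : Multiset Lab1) ∨
    C = ({EE, MM, MY0} : Multiset Lab1) ∨ C = ({MY0, MM, MY0} : Multiset Lab1) ∨
    C = ({MY1, MM, MY0} : Multiset Lab1) ∨ C = ({MY0, MY0, MY1} : Multiset Lab1) := by
  constructor
  · rintro ⟨D, hD, l1, h1, l2, h2, l3, h3, rfl⟩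
    simp only [cond1, List.mem_cons, List.mem_singleton, List.not_mem_nil, or_false] at hD
    rcases hD with rfl | rfl <;>
      simp only [Matrix.cons_val_zero, Matrix.cons_val_one, Matrix.head_cons,
        Matrix.cons_val_two, Matrix.tail_cons, Set.mem_insert_iff,
        Set.mem_singleton_iff] at h1 h2 h3 <;>
      rcases h1 with rfl | rfl | rfl | rfl <;> try rcases h1 with rfl | rfl
    all_goals (rcases h2 with rfl | rfl | rfl <;> try skip)
    all_goals (rcases h3 with rfl | rfl <;> decide)
  · rintro (rfl | rfl | rfl | rfl | rfl | rfl | rfl | rfl)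
    · exact mem1 EE MM (by simp) (by simp)
    · exact mem1 MM MM (by simp) (by simp)
    · exact mem1 MY0 MM (by simp) (by simp)
    · exact mem1 MY1 MM (by simp) (by simp)
    · exact mem1 EE MY0 (by simp) (by simp)
    · exact mem1 MY0 MY0 (by simp) (by simp)
    · exact mem1 MY1 MY0 (by simp) (by simp)
    · exact mem2 MY0 MY0 MY1 (by simp) (by simp) (by simp)

lemma e1b_mem (a b c : Lab1) : e1b a b c = true ↔ ({a, b, c} : Multiset Lab1) ∈ E1 := by
  rw [E1_iff]
  cases a <;> cases b <;> cases c <;> decide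

/- row ↔ set lemmas -/

lemma hD11 : ∀ l, D11 l = true ↔ l ∈ ({EE, MM, MY0, MY1} : Set Lab1) := by
  intro l; cases l <;> simp [D11, row]
lemma hD12 : ∀ l, D12 l = true ↔ l ∈ ({MM} : Set Lab1) := by
  intro l; cases l <;> simp [D12, row]
lemma hD13 : ∀ l, D13 l = true ↔ l ∈ ({MM, MY0} : Set Lab1) := by
  intro l; cases l <;> simp [D13, row]
lemma hD21 : ∀ l, D21 l = true ↔ l ∈ ({MM, MY0} : Set Lab1) := by
  intro l; cases l <;> simp [D21, row]
lemma hD23 : ∀ l, D23 l = true ↔ l ∈ ({MM, MY1} : Set Lab1) := by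
  intro l; cases l <;> simp [D23, row]

/-- **The two condensed configurations defining ℰ₁ form a maximal-complete collection**:
every maximal triple of nonempty subsets of Λ₁ satisfying the universal quantifier w.r.t.
ℰ₁ equals, up to permutation of the three components,
({EE,MM,MY0,MY1},{MM},{MM,MY0}) or ({MM,MY0},{MM,MY0},{MM,MY1}). -/
theorem color1_maximal_complete (S : Fin 3 → Set Lab1)
    (hne : ∀ j, (S j).Nonempty)
    (hUQ : E1UQ S)
    (hmax : ¬ ∃ S' : Fin 3 → Set Lab1,
        E1UQ S' ∧ (∀ j, S j ⊆ S' j) ∧ (∃ j, S j ⊂ S' j)) :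
    ∃ ρ : Equiv.Perm (Fin 3), ∃ D ∈ cond1, ∀ j, S (ρ j) = D j := by
  classical
  obtain ⟨f, hf⟩ : ∃ f : Fin 3 → Lab1 → Bool, ∀ j l, f j l = true ↔ l ∈ S j :=
    ⟨fun j l => decide (l ∈ S j), fun j l => by simp⟩
  -- bridge between uq3 and E1UQ
  have bridge : ∀ (T : Fin 3 → Set Lab1) (g0 g1 g2 : R),
      (∀ l, g0 l = true ↔ l ∈ T 0) → (∀ l, g1 l = true ↔ l ∈ T 1) →
      (∀ l, g2 l = true ↔ l ∈ T 2) → (uq3 g0 g1 g2 = true ↔ E1UQ T) := by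
    intro T g0 g1 g2 h0 h1 h2
    rw [uq3_iff]
    constructor
    · intro h a ha b hb c hc
      exact (e1b_mem a b c).mp (h a b c ((h0 a).mpr ha) ((h1 b).mpr hb) ((h2 c).mpr hc))
    · intro h a b c ha hb hc
      exact (e1b_mem a b c).mpr (h a ((h0 a).mp ha) b ((h1 b).mp hb) c ((h2 c).mp hc))
  have hE : ∀ j, exLab (f j) = true := by
    intro j
    rw [exLab_iff]
    obtain ⟨l, hl⟩ := hne j
    exact ⟨l, (hf j l).mpr hl⟩
  have hu : uq3 (f 0) (f 1) (f 2) = true :=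
    (bridge S (f 0) (f 1) (f 2) (hf 0) (hf 1) (hf 2)).mpr hUQ
  -- maximality transfers
  have noext : ∀ (j : Fin 3) (l : Lab1), f j l = false →
      uq3 (if (0 : Fin 3) = j then addl (f 0) l else f 0)
          (if (1 : Fin 3) = j then addl (f 1) l else f 1)
          (if (2 : Fin 3) = j then addl (f 2) l else f 2) = false := by
    intro j l hfl
    by_contra hne'
    rw [Bool.not_eq_false] at hne'
    set T : Fin 3 → Set Lab1 := Function.update S j (insert l (S j)) with hT
    have hcorr : ∀ (i : Fin 3) (l' : Lab1),
        (if i = j then addl (f i) l else f i) l' = true ↔ l' ∈ T i := by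
      intro i l'
      by_cases h : i = j
      · rw [if_pos h]
        subst h
        rw [hT, Function.update_self]
        simp [addl, hf, Set.mem_insert_iff, or_comm]
      · rw [if_neg h, hT, Function.update_of_ne h]
        exact hf i l'
    have hTuq : E1UQ T := (bridge T _ _ _ (hcorr 0) (hcorr 1) (hcorr 2)).mp hne'
    apply hmax
    refine ⟨T, hTuq, ?_, ⟨j, ?_⟩⟩
    · intro j'
      by_cases h : j' = j
      · subst h; rw [hT, Function.update_self]; exact Set.subset_insert _ _
      · rw [hT, Function.update_of_ne h]
    · rw [hT, Function.update_self]
      refine Set.ssubset_insert ?_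
      intro hl
      rw [← hf j l, hfl] at hl
      exact Bool.false_ne_true hl
  have hm : maxb (f 0) (f 1) (f 2) = true := by
    simp only [maxb, Bool.and_eq_true, allLab_iff]
    refine ⟨⟨?_, ?_⟩, ?_⟩ <;> intro l <;> rw [Bool.or_eq_true]
    · rcases hh : f 0 l with _ | _
      · refine Or.inr ?_
        rw [Bool.not_eq_true']
        have h := noext 0 l hh
        rwa [if_pos rfl, if_neg (by decide), if_neg (by decide)] at h
      · exact Or.inl rfl
    · rcases hh : f 1 l with _ | _
      · refine Or.inr ?_
        rw [Bool.not_eq_true']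
        have h := noext 1 l hh
        rwa [if_neg (by decide), if_pos rfl, if_neg (by decide)] at h
      · exact Or.inl rfl
    · rcases hh : f 2 l with _ | _
      · refine Or.inr ?_
        rw [Bool.not_eq_true']
        have h := noext 2 l hh
        rwa [if_neg (by decide), if_neg (by decide), if_pos rfl] at h
      · exact Or.inl rfl
  -- use the checker
  have hcheck : check1 (f 0) (f 1) (f 2) = true := by
    have h := check_true
    rw [checkAll, List.all_eq_true] at h
    have h0 := h (f 0) (mem_rows _)
    rw [List.all_eq_true] at h0
    have h1 := h0 (f 1) (mem_rows _)
    rw [List.all_eq_true] at h1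
    exact h1 (f 2) (mem_rows _)
  have hg : goalb (f 0) (f 1) (f 2) = true := by
    rw [check1, hE 0, hE 1, hE 2, hu, hm] at hcheck
    simpa using hcheck
  -- conclude
  have key : ∀ (jj : Fin 3) (A : R) (T : Set Lab1), (∀ l, A l = true ↔ l ∈ T) →
      eqR (f jj) A = true → S jj = T := by
    intro jj A T hAT hEq
    ext l
    rw [← hf jj l, eqR_eq hEq]
    exact hAT l
  have step : ∀ ρ : Equiv.Perm (Fin 3), match1 (f (ρ 0)) (f (ρ 1)) (f (ρ 2)) = true →
      ∃ ρ : Equiv.Perm (Fin 3), ∃ D ∈ cond1, ∀ j, S (ρ j) = D j := by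
    intro ρ h
    simp only [match1, Bool.or_eq_true, Bool.and_eq_true] at h
    rcases h with ⟨⟨h0, h1⟩, h2⟩ | ⟨⟨h0, h1⟩, h2⟩
    · refine ⟨ρ, ![{EE, MM, MY0, MY1}, {MM}, {MM, MY0}], by simp [cond1], ?_⟩
      intro j
      fin_cases j
      · exact key _ _ _ hD11 h0
      · exact key _ _ _ hD12 h1
      · exact key _ _ _ hD13 h2
    · refine ⟨ρ, ![{MM, MY0}, {MM, MY0}, {MM, MY1}], by simp [cond1], ?_⟩
      intro j
      fin_cases j
      · exact key _ _ _ hD21 h0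
      · exact key _ _ _ hD21 h1
      · exact key _ _ _ hD23 h2
  simp only [goalb, Bool.or_eq_true] at hg
  rcases hg with ((((h | h) | h) | h) | h) | h
  · exact step (Equiv.refl _) h
  · exact step ⟨![0,2,1], ![0,2,1], by intro x; fin_cases x <;> rfl,
      by intro x; fin_cases x <;> rfl⟩ h
  · exact step ⟨![1,0,2], ![1,0,2], by intro x; fin_cases x <;> rfl,
      by intro x; fin_cases x <;> rfl⟩ h
  · exact step ⟨![1,2,0], ![2,0,1], by intro x; fin_cases x <;> rfl,
      by intro x; fin_cases x <;> rfl⟩ h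
  · exact step ⟨![2,0,1], ![1,2,0], by intro x; fin_cases x <;> rfl,
      by intro x; fin_cases x <;> rfl⟩ h
  · exact step ⟨![2,1,0], ![2,1,0], by intro x; fin_cases x <;> rfl,
      by intro x; fin_cases x <;> rfl⟩ h
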